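/- For every p ≥ 1 and β > 0, let Λ ⊂ ℤ² be finite with zero boundary condition, let h′ < h be integers, and let γ, γ′ be contours with Λ_γ ⊆ Λ_{γ′} ⊆ Λ and hatπ^{p,0}_Λ(C_{γ′,h′}) > 0. Then hatπ^{p,0}_Λ(C_{γ,h} | C_{γ′,h′}) ≤ exp(−β|γ|). -/

import Mathlib

open scoped BigOperators Classical

noncomputable section

namespace PSOS

/-- Sites of the square lattice `ℤ²`. -/
abbrev Site : Type := ℤ × ℤ

/-- The nearest-neighbour edges incident to `x`, each written in its normalized
(right/up oriented) form, so that every unordered pair appears in a unique way. -/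
def edgesAt (x : Site) : Finset (Site × Site) :=
  {(x, (x.1 + 1, x.2)), (x, (x.1, x.2 + 1)),
   ((x.1 - 1, x.2), x), ((x.1, x.2 - 1), x)}

/-- Nearest-neighbour edges of `ℤ²` with at least one endpoint in `Λ`,
each unordered pair appearing exactly once. -/
def edges (Λ : Finset Site) : Finset (Site × Site) := Λ.biUnion edgesAt

/-- Extension `ξ` of a configuration `η : Λ → ℤ` by the boundary condition `φ` off `Λ`. -/
def extend (Λ : Finset Site) (φ : Site → ℤ) (η : Λ → ℤ) : Site → ℤ :=
  fun x => if h : x ∈ Λ then η ⟨x, h⟩ else φ x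

/-- The `p`-SOS Hamiltonian `H^{p,φ}_Λ` on `Λ` with boundary condition `φ`. -/
def ham (p : ℝ) (Λ : Finset Site) (φ : Site → ℤ) (η : Λ → ℤ) : ℝ :=
  ∑ e ∈ edges Λ, (|extend Λ φ η e.1 - extend Λ φ η e.2| : ℝ) ^ p

/-- Boltzmann weight `exp(-β H^{p,φ}_Λ(η))`. -/
def weight (p β : ℝ) (Λ : Finset Site) (φ : Site → ℤ) (η : Λ → ℤ) : ℝ :=
  Real.exp (-β * ham p Λ φ η)

/-- Finite-volume Gibbs probability `hatπ^{p,φ}_Λ(A)` of an event `A ⊆ ℤ^Λ`. -/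
def gibbs (p β : ℝ) (Λ : Finset Site) (φ : Site → ℤ) (A : Set (Λ → ℤ)) : ℝ :=
  (∑' η : A, weight p β Λ φ η) / (∑' η : (Λ → ℤ), weight p β Λ φ η)

/-- Gibbs expectation of an observable under `hatπ^{p,φ}_Λ`. -/
def gibbsExp (p β : ℝ) (Λ : Finset Site) (φ : Site → ℤ) (f : (Λ → ℤ) → ℝ) : ℝ :=
  (∑' η : (Λ → ℤ), f η * weight p β Λ φ η) / (∑' η : (Λ → ℤ), weight p β Λ φ η)

/-- The floor event `{η : η_x ≥ 0 for all x ∈ Λ}`. -/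
def floorSet (Λ : Finset Site) : Set (Λ → ℤ) := {η | ∀ x, 0 ≤ η x}

/-- The event `{η : 0 ≤ η_x ≤ n for all x ∈ Λ}` (floor at `0`, ceiling at `n`). -/
def boxSet (Λ : Finset Site) (n : ℕ) : Set (Λ → ℤ) :=
  {η | ∀ x, 0 ≤ η x ∧ η x ≤ (n : ℤ)}

/-- `barπ^{p,0}_Λ`: the Gibbs measure with zero boundary condition conditioned
on the floor event. -/
def barGibbs (p β : ℝ) (Λ : Finset Site) (A : Set (Λ → ℤ)) : ℝ :=
  gibbs p β Λ 0 (A ∩ floorSet Λ) / gibbs p β Λ 0 (floorSet Λ)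

/-- `π^{p,0}_Λ`: the Gibbs measure with zero boundary condition conditioned on
having floor at `0` and ceiling at `n`. -/
def ceilGibbs (p β : ℝ) (Λ : Finset Site) (n : ℕ) (A : Set (Λ → ℤ)) : ℝ :=
  gibbs p β Λ 0 (A ∩ boxSet Λ n) / gibbs p β Λ 0 (boxSet Λ n)

/-- The nearest-neighbour graph on `ℤ²`. -/
def nbrGraph : SimpleGraph Site where
  Adj x y := (x.1 - y.1).natAbs + (x.2 - y.2).natAbs = 1
  symm := by constructor; intro x y hxy; (try simp only at hxy ⊢); omega
  loopless := by constructor; intro x h; (try simp only at h); omega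

/-- The four nearest neighbours of a site. -/
def nbrs (x : Site) : Finset Site :=
  {(x.1 + 1, x.2), (x.1 - 1, x.2), (x.1, x.2 + 1), (x.1, x.2 - 1)}

/-- A contour `γ` of the dual lattice `(ℤ²)*`, identified with the finite region
`Λ_γ ⊆ ℤ²` of sites it encloses: the region is nonempty and connected with
connected complement, so that its edge boundary is a single closed dual circuit
(consistently with the standard linking rule at dual vertices). -/
structure Contour where
  interior : Finset Site
  nonempty : interior.Nonempty
  conn : (nbrGraph.induce (interior : Set Site)).Connected
  coconn : (nbrGraph.induce ((interior : Set Site)ᶜ)).Connected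

/-- The nearest-neighbour edges crossing the boundary of `S`, oriented from
inside to outside; these correspond to the bonds of the dual circuit bounding `S`. -/
def bdryEdges (S : Finset Site) : Finset (Site × Site) :=
  S.biUnion fun x => ((nbrs x).filter fun y => y ∉ S).image fun y => (x, y)

/-- `|γ|`: the number of bonds of the contour `γ`. -/
def Contour.len (γ : Contour) : ℕ := (bdryEdges γ.interior).card

/-- `∂⁺_γ`: sites of the interior adjacent to the exterior. -/
def innerBdry (S : Finset Site) : Finset Site :=
  S.filter fun x => ∃ y ∈ nbrs x, y ∉ S

/-- `∂⁻_γ`: sites of the exterior adjacent to the interior. -/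
def outerBdry (S : Finset Site) : Finset Site :=
  (S.biUnion nbrs).filter fun y => y ∉ S

/-- The event `C_{γ,h}` that `γ` is an `h`-contour: the extended configuration `ξ`
is at least `h` on `∂⁺_γ` and at most `h - 1` on `∂⁻_γ`. -/
def contourEvent (Λ : Finset Site) (φ : Site → ℤ) (γ : Contour) (h : ℤ) :
    Set (Λ → ℤ) :=
  {η | (∀ x ∈ innerBdry γ.interior, h ≤ extend Λ φ η x) ∧
       (∀ y ∈ outerBdry γ.interior, extend Λ φ η y ≤ h - 1)}

/-- The map `T_γ` lowering the configuration by `1` inside the contour `γ`. -/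
def lower (Λ : Finset Site) (γ : Contour) (η : Λ → ℤ) : Λ → ℤ :=
  fun x => if (x : Site) ∈ γ.interior then η x - 1 else η x

/-- An event is increasing if it is upward closed for the pointwise order. -/
def IncrEvent (Λ : Finset Site) (E : Set (Λ → ℤ)) : Prop :=
  ∀ η η' : Λ → ℤ, (∀ x, η x ≤ η' x) → η ∈ E → η' ∈ E

/-!
Lowering the configuration by one inside `γ` maps `C_{γ,h} ∩ C_{γ',h'}` injectively into
`C_{γ',h'}`, because `h' < h` and `Λ_γ ⊆ Λ_{γ'}`. Across each bond of `γ` the height drops by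
some `t ≥ 1`, and lowering replaces its cost `t ^ p` by `(t - 1) ^ p ≤ t ^ p - 1`
(superadditivity of `t ↦ t ^ p` for `p ≥ 1`), while all other bonds keep their cost. Hence the
lowering multiplies every weight of `C_{γ,h} ∩ C_{γ',h'}` by at least `exp (β |γ|)`.
-/

open Finset

/-- The right/up orientation in which `edgesAt` lists each nearest-neighbour edge. -/
def IsRightUp (e : Site × Site) : Prop :=
  e.2 = (e.1.1 + 1, e.1.2) ∨ e.2 = (e.1.1, e.1.2 + 1)

lemma IsRightUp.not_swap {e : Site × Site} (he : IsRightUp e) : ¬IsRightUp e.swap := by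
  obtain ⟨⟨a, b⟩, ⟨c, d⟩⟩ := e
  simp only [IsRightUp, Prod.swap, Prod.mk.injEq] at he ⊢
  omega

lemma mem_nbrs_iff_isRightUp {x y : Site} :
    y ∈ nbrs x ↔ IsRightUp (x, y) ∨ IsRightUp (y, x) := by
  obtain ⟨a, b⟩ := x
  obtain ⟨c, d⟩ := y
  simp only [nbrs, IsRightUp, mem_insert, mem_singleton, Prod.mk.injEq]
  omega

lemma nbrs_symm {x y : Site} (h : y ∈ nbrs x) : x ∈ nbrs y := by
  rw [mem_nbrs_iff_isRightUp] at h ⊢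
  exact h.symm

lemma mem_edges {Λ : Finset Site} {e : Site × Site} :
    e ∈ edges Λ ↔ (e.1 ∈ Λ ∨ e.2 ∈ Λ) ∧ IsRightUp e := by
  obtain ⟨⟨a, b⟩, ⟨c, d⟩⟩ := e
  simp only [edges, edgesAt, IsRightUp, mem_biUnion, mem_insert, mem_singleton, Prod.mk.injEq]
  constructor
  · rintro ⟨x, hx, ⟨⟨rfl, rfl⟩, rfl, rfl⟩ | ⟨⟨rfl, rfl⟩, rfl, rfl⟩ |
      ⟨⟨rfl, rfl⟩, rfl, rfl⟩ | ⟨⟨rfl, rfl⟩, rfl, rfl⟩⟩ <;> simp [hx]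
  · rintro ⟨hx | hx, h⟩
    · exact ⟨(a, b), hx, by simp only [Prod.mk.injEq, true_and, and_true]; omega⟩
    · exact ⟨(c, d), hx, by simp only [Prod.mk.injEq, true_and, and_true]; omega⟩

lemma mem_bdryEdges {S : Finset Site} {e : Site × Site} :
    e ∈ bdryEdges S ↔ e.1 ∈ S ∧ e.2 ∈ nbrs e.1 ∧ e.2 ∉ S := by
  obtain ⟨a, b⟩ := e
  simp only [bdryEdges, mem_biUnion, mem_image, mem_filter, Prod.mk.injEq]
  constructor
  · rintro ⟨x, hx, y, ⟨hy, hyS⟩, rfl, rfl⟩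
    exact ⟨hx, hy, hyS⟩
  · rintro ⟨ha, hb, hbS⟩
    exact ⟨a, ha, b, ⟨hb, hbS⟩, rfl, rfl⟩

lemma mem_innerBdry {S : Finset Site} {x : Site} :
    x ∈ innerBdry S ↔ x ∈ S ∧ ∃ y ∈ nbrs x, y ∉ S := by
  simp [innerBdry]

lemma mem_outerBdry {S : Finset Site} {y : Site} :
    y ∈ outerBdry S ↔ (∃ x ∈ S, y ∈ nbrs x) ∧ y ∉ S := by
  simp [outerBdry]

lemma card_filter_xor_edges {Λ S : Finset Site} (hS : S ⊆ Λ) :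
    #{e ∈ edges Λ | Xor (e.1 ∈ S) (e.2 ∈ S)} = #(bdryEdges S) := by
  refine card_nbij' (fun e => if e.1 ∈ S then e else e.swap)
    (fun e => if IsRightUp e then e else e.swap) ?_ ?_ ?_ ?_
  · rintro e he
    simp only [coe_filter, Set.mem_ofPred_eq, mem_edges] at he
    obtain ⟨⟨-, hup⟩, ⟨h1, h2⟩ | ⟨h2, h1⟩⟩ := he
    · simpa [h1, mem_bdryEdges, mem_nbrs_iff_isRightUp, hup] using h2
    · simpa [h1, mem_bdryEdges, mem_nbrs_iff_isRightUp, hup] using h2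
  · rintro e he
    simp only [mem_coe, mem_bdryEdges, mem_nbrs_iff_isRightUp] at he
    obtain ⟨h1, hup | hup, h2⟩ := he
    · simp [mem_edges, hup, h1, h2, hS h1]
    · have hdown : ¬IsRightUp e := fun h => h.not_swap hup
      have hup' : IsRightUp e.swap := hup
      simp [mem_edges, hup', hdown, h1, h2, hS h1]
  · rintro e he
    simp only [coe_filter, Set.mem_ofPred_eq, mem_edges] at he
    obtain ⟨⟨-, hup⟩, ⟨h1, -⟩ | ⟨-, h1⟩⟩ := he
    · simp [h1, hup]
    · simp [h1, hup.not_swap]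
  · rintro e he
    simp only [mem_coe, mem_bdryEdges, mem_nbrs_iff_isRightUp] at he
    obtain ⟨h1, hup | hup, h2⟩ := he
    · simp [hup, h1]
    · have hdown : ¬IsRightUp e := fun h => h.not_swap hup
      simp [hdown, h2]

lemma abs_sub_one_sub_rpow_add_one_le {p a b : ℝ} (hp : 1 ≤ p) (hab : b + 1 ≤ a) :
    |a - 1 - b| ^ p + 1 ≤ |a - b| ^ p := by
  have hab' : 0 ≤ a - 1 - b := by linarith
  rw [abs_of_nonneg hab', abs_of_nonneg (by linarith)]
  simpa [sub_right_comm] using Real.add_rpow_le_rpow_add hab' zero_le_one hp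

section Lowering

variable {p β : ℝ} {Λ : Finset Site} {φ : Site → ℤ} {γ : Contour} {h : ℤ} {η : Λ → ℤ}

lemma extend_lower (hγ : γ.interior ⊆ Λ) (x : Site) :
    extend Λ φ (lower Λ γ η) x = extend Λ φ η x - if x ∈ γ.interior then 1 else 0 := by
  by_cases hx : x ∈ Λ
  · simp only [extend, lower, dif_pos hx]
    split_ifs <;> ring
  · have hxγ : x ∉ γ.interior := fun hxγ => hx (hγ hxγ)
    simp [extend, hx, hxγ]

lemma lower_injective (Λ : Finset Site) (γ : Contour) : Function.Injective (lower Λ γ) := by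
  intro η η' hηη'
  funext x
  have := congrFun hηη' x
  by_cases hx : (x : Site) ∈ γ.interior <;> simp only [lower, hx, if_true, if_false] at this <;>
    omega

lemma extend_add_one_le_of_mem_contourEvent (hη : η ∈ contourEvent Λ φ γ h) {x y : Site}
    (hxy : y ∈ nbrs x) (hx : x ∈ γ.interior) (hy : y ∉ γ.interior) :
    extend Λ φ η y + 1 ≤ extend Λ φ η x := by
  have hhx := hη.1 x (mem_innerBdry.2 ⟨hx, y, hxy, hy⟩)
  have hhy := hη.2 y (mem_outerBdry.2 ⟨⟨x, hx, hxy⟩, hy⟩)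
  omega

lemma edge_lower_add_le (hp : 1 ≤ p) (hγ : γ.interior ⊆ Λ) (hη : η ∈ contourEvent Λ φ γ h)
    {x y : Site} (hxy : y ∈ nbrs x) :
    |(extend Λ φ (lower Λ γ η) x : ℝ) - extend Λ φ (lower Λ γ η) y| ^ p
        + (if Xor (x ∈ γ.interior) (y ∈ γ.interior) then 1 else 0)
      ≤ |(extend Λ φ η x : ℝ) - extend Λ φ η y| ^ p := by
  rw [extend_lower hγ, extend_lower hγ]
  by_cases hx : x ∈ γ.interior <;> by_cases hy : y ∈ γ.interior <;>
    simp only [hx, hy, xor_def, if_true, if_false, sub_zero, and_true, not_true, not_false_eq_true,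
      and_false, or_false, false_or] <;> push_cast
  · simp
  · refine abs_sub_one_sub_rpow_add_one_le hp ?_
    exact_mod_cast extend_add_one_le_of_mem_contourEvent hη hxy hx hy
  · rw [abs_sub_comm, abs_sub_comm (extend Λ φ η x : ℝ)]
    refine abs_sub_one_sub_rpow_add_one_le hp ?_
    exact_mod_cast extend_add_one_le_of_mem_contourEvent hη (nbrs_symm hxy) hy hx
  · simp

lemma ham_lower_add_len_le (hp : 1 ≤ p) (hγ : γ.interior ⊆ Λ)
    (hη : η ∈ contourEvent Λ φ γ h) :
    ham p Λ φ (lower Λ γ η) + γ.len ≤ ham p Λ φ η := by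
  have hlen : (γ.len : ℝ) =
      ∑ e ∈ edges Λ, if Xor (e.1 ∈ γ.interior) (e.2 ∈ γ.interior) then 1 else 0 := by
    rw [sum_boole, card_filter_xor_edges hγ, Contour.len]
  rw [hlen, ham, ← sum_add_distrib]
  refine sum_le_sum fun e he => edge_lower_add_le hp hγ hη ?_
  exact mem_nbrs_iff_isRightUp.2 (Or.inl (mem_edges.1 he).2)

lemma weight_le_exp_mul_weight_lower (hp : 1 ≤ p) (hβ : 0 ≤ β) (hγ : γ.interior ⊆ Λ)
    (hη : η ∈ contourEvent Λ φ γ h) :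
    weight p β Λ φ η ≤ Real.exp (-β * γ.len) * weight p β Λ φ (lower Λ γ η) := by
  rw [weight, weight, ← Real.exp_add, Real.exp_le_exp]
  nlinarith [mul_le_mul_of_nonneg_left (ham_lower_add_len_le hp hγ hη) hβ]

lemma lower_mapsTo_contourEvent {γ' : Contour} {h' : ℤ} (hh : h' < h)
    (hsub : γ.interior ⊆ γ'.interior) (hγ : γ.interior ⊆ Λ) :
    Set.MapsTo (lower Λ γ) (contourEvent Λ φ γ h ∩ contourEvent Λ φ γ' h')
      (contourEvent Λ φ γ' h') := by
  rintro η ⟨⟨hin, -⟩, hin', hout'⟩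
  refine ⟨fun x hx => ?_, fun y hy => ?_⟩
  · rw [extend_lower hγ]
    by_cases hxγ : x ∈ γ.interior
    · obtain ⟨-, z, hz, hzγ'⟩ := mem_innerBdry.1 hx
      have := hin x (mem_innerBdry.2 ⟨hxγ, z, hz, fun hzγ => hzγ' (hsub hzγ)⟩)
      rw [if_pos hxγ]
      omega
    · rw [if_neg hxγ, sub_zero]
      exact hin' x hx
  · have hyγ : y ∉ γ.interior := fun hyγ => (mem_outerBdry.1 hy).2 (hsub hyγ)
    rw [extend_lower hγ, if_neg hyγ, sub_zero]
    exact hout' y hy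

lemma gibbs_nonneg (A : Set (Λ → ℤ)) : 0 ≤ gibbs p β Λ φ A :=
  div_nonneg (tsum_nonneg fun _ => (Real.exp_pos _).le) (tsum_nonneg fun _ => (Real.exp_pos _).le)

lemma gibbs_le_mul_of_mapsTo {A B : Set (Λ → ℤ)} {T : (Λ → ℤ) → Λ → ℤ} (hT : Set.InjOn T A)
    (hAB : Set.MapsTo T A B) {c : ℝ} (hc : 0 ≤ c)
    (hw : ∀ η ∈ A, weight p β Λ φ η ≤ c * weight p β Λ φ (T η)) :
    gibbs p β Λ φ A ≤ c * gibbs p β Λ φ B := by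
  have hw0 : ∀ η, 0 ≤ weight p β Λ φ η := fun _ => (Real.exp_pos _).le
  by_cases hs : Summable (weight p β Λ φ)
  · rw [gibbs, gibbs, mul_div_assoc']
    refine div_le_div_of_nonneg_right ?_ (tsum_nonneg hw0)
    rw [← tsum_mul_left]
    exact (hs.subtype A).tsum_le_tsum_of_inj (hAB.restrict T A B) (hAB.restrict_inj.2 hT)
      (fun _ _ => mul_nonneg hc (hw0 _)) (fun η => hw η η.2) ((hs.subtype B).mul_left c)
  · simp [gibbs, tsum_eq_zero_of_not_summable hs]

end Lowering

theorem statement_2_general (p β : ℝ) (hp : 1 ≤ p) (hβ : 0 < β)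
    (Λ : Finset Site) (γ γ' : Contour) (h h' : ℤ) (hh : h' < h)
    (hsub : γ.interior ⊆ γ'.interior) (hsub' : γ'.interior ⊆ Λ) :
    gibbs p β Λ 0 (contourEvent Λ 0 γ h ∩ contourEvent Λ 0 γ' h') /
        gibbs p β Λ 0 (contourEvent Λ 0 γ' h')
      ≤ Real.exp (-β * (γ.len : ℝ)) := by
  have hγ : γ.interior ⊆ Λ := hsub.trans hsub'
  refine div_le_of_le_mul₀ (gibbs_nonneg _) (Real.exp_pos _).le ?_
  exact gibbs_le_mul_of_mapsTo (lower_injective Λ γ).injOn (lower_mapsTo_contourEvent hh hsub hγ)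
    (Real.exp_pos _).le fun η hη => weight_le_exp_mul_weight_lower hp hβ.le hγ hη.1

/-- conditional Peierls bound: for `h' < h` and nested contours
`Λ_γ ⊆ Λ_{γ'} ⊆ Λ`, `hatπ^{p,0}_Λ(C_{γ,h} | C_{γ',h'}) ≤ exp(-β|γ|)`. -/
theorem statement_2 (p β : ℝ) (hp : 1 ≤ p) (hβ : 0 < β)
    (Λ : Finset Site) (γ γ' : Contour) (h h' : ℤ) (hh : h' < h)
    (hsub : γ.interior ⊆ γ'.interior) (hsub' : γ'.interior ⊆ Λ)
    (hpos : 0 < gibbs p β Λ 0 (contourEvent Λ 0 γ' h')) :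
    gibbs p β Λ 0 (contourEvent Λ 0 γ h ∩ contourEvent Λ 0 γ' h') /
        gibbs p β Λ 0 (contourEvent Λ 0 γ' h')
      ≤ Real.exp (-β * (γ.len : ℝ)) :=
  statement_2_general p β hp hβ Λ γ γ' h h' hh hsub hsub'

end PSOS
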